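/- arXiv:2305.12079 — 3 statements merged into one kernel-verified Lean document; each statement's English description precedes it below -/
import Mathlib

section
/- Let f: [0,1] → [0,1] be an integrable function, t ∈ (0,1], s ∈ [0,1], and define g: [0,2t] → [0,1] by g(x) = f(x) for x ≤ t and g(x) = f(x−t) for x > t, and h(x) = ∫_x^{x+st} g(y) dy. Then the average value of h over [0,t], namely (1/t)∫_0^t h(x) dx, equals s·∫_0^t f(x) dx. -/
open MeasureTheory Set

/-- The average value over `[0,t]` of the wrap-around window integral `h`
equals `s` times the integral of `f` over `[0,t]`. -/
theorem average_of_wrap_around (f : ℝ → ℝ) (hmeas : Measurable f)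
    (hrange : ∀ x ∈ Icc (0:ℝ) 1, f x ∈ Icc (0:ℝ) 1)
    (t : ℝ) (ht : t ∈ Ioc (0:ℝ) 1) (s : ℝ) (hs : s ∈ Icc (0:ℝ) 1)
    (g : ℝ → ℝ) (hg : ∀ x, g x = if x ≤ t then f x else f (x - t))
    (h : ℝ → ℝ) (hh : ∀ x, h x = ∫ y in x..(x + s * t), g y) :
    (1 / t) * ∫ x in (0:ℝ)..t, h x = s * ∫ x in (0:ℝ)..t, f x := by
  obtain ⟨ht0, ht1⟩ := ht
  obtain ⟨hs0, hs1⟩ := hs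
  have hst0 : 0 ≤ s * t := mul_nonneg hs0 ht0.le
  have hstt : s * t ≤ t := by nlinarith
  set F : ℝ → ℝ := fun u => ∫ y in (0:ℝ)..u, f y with hF
  set H : ℝ → ℝ := fun x => ∫ y in (0:ℝ)..x, g y with hH
  set I : ℝ := ∫ x in (0:ℝ)..t, f x with hI
  -- measurability of g
  have hgm : Measurable g := by
    have : g = fun x => if x ≤ t then f x else f (x - t) := funext hg
    rw [this]
    exact Measurable.ite (measurableSet_le measurable_id measurable_const) hmeas
      (hmeas.comp (measurable_id.sub measurable_const))
  -- f integrable on [0,1]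
  have hfint : IntegrableOn f (Icc (0:ℝ) 1) := by
    refine Integrable.mono' (integrable_const 1) hmeas.aestronglyMeasurable ?_
    filter_upwards [ae_restrict_mem measurableSet_Icc] with x hx
    have := hrange x hx
    rw [Real.norm_eq_abs, abs_le]
    exact ⟨by linarith [this.1], this.2⟩
  -- g integrable on [0,2t]
  have hgintOn : IntegrableOn g (Icc (0:ℝ) (2*t)) := by
    refine Integrable.mono' (integrable_const 1) hgm.aestronglyMeasurable ?_
    filter_upwards [ae_restrict_mem measurableSet_Icc] with x hx
    rw [hg x, Real.norm_eq_abs, abs_le]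
    split_ifs with hxt
    · have := hrange x ⟨hx.1, by linarith⟩
      exact ⟨by linarith [this.1], this.2⟩
    · push_neg at hxt
      have := hrange (x - t) ⟨by linarith, by linarith [hx.2]⟩
      exact ⟨by linarith [this.1], this.2⟩
  have hgInt : ∀ a b, a ∈ Icc (0:ℝ) (2*t) → b ∈ Icc (0:ℝ) (2*t) →
      IntervalIntegrable g volume a b := fun a b ha hb =>
    (hgintOn.mono_set (uIcc_subset_Icc ha hb)).intervalIntegrable
  have hfInt : ∀ a b, a ∈ Icc (0:ℝ) 1 → b ∈ Icc (0:ℝ) 1 →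
      IntervalIntegrable f volume a b := fun a b ha hb =>
    (hfint.mono_set (uIcc_subset_Icc ha hb)).intervalIntegrable
  -- continuity of primitives
  have h2t : (0:ℝ) ≤ 2 * t := by linarith
  have hHc : ContinuousOn H (Icc (0:ℝ) (2*t)) := by
    have := intervalIntegral.continuousOn_primitive_interval
      (a := (0:ℝ)) (b := 2*t) (μ := volume) (f := g)
      (by rwa [uIcc_of_le h2t])
    rwa [uIcc_of_le h2t] at this
  have hFc : ContinuousOn F (Icc (0:ℝ) 1) := by
    have := intervalIntegral.continuousOn_primitive_interval
      (a := (0:ℝ)) (b := 1) (μ := volume) (f := f)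
      (by rwa [uIcc_of_le zero_le_one])
    rwa [uIcc_of_le zero_le_one] at this
  -- membership helpers
  have hmem : ∀ x : ℝ, x ∈ Icc (0:ℝ) (2*t) → H x = ∫ y in (0:ℝ)..x, g y := fun _ _ => rfl
  -- Step 1: rewrite h on [0,t]
  have step1 : (∫ x in (0:ℝ)..t, h x) = ∫ x in (0:ℝ)..t, (H (x + s*t) - H x) := by
    refine intervalIntegral.integral_congr fun x hx => ?_
    rw [uIcc_of_le ht0.le] at hx
    have hx0 : (0:ℝ) ≤ x := hx.1
    have hxt : x ≤ t := hx.2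
    rw [hh x]
    have h1 : x ∈ Icc (0:ℝ) (2*t) := ⟨hx0, by linarith⟩
    have h2 : x + s*t ∈ Icc (0:ℝ) (2*t) := ⟨by linarith, by linarith⟩
    have := intervalIntegral.integral_interval_sub_left
      (hgInt 0 (x + s*t) ⟨le_refl 0, h2t⟩ h2) (hgInt 0 x ⟨le_refl 0, h2t⟩ h1)
    simpa [hH] using this.symm
  -- interval integrability of H-pieces on [0,t]
  have hHshift : ContinuousOn (fun x => H (x + s*t)) (Icc (0:ℝ) t) := by
    refine hHc.comp (Continuous.continuousOn (continuous_id.add continuous_const)) fun x hx => ?_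
    exact ⟨by simp at hx ⊢; linarith [hx.1], by simp at hx ⊢; linarith [hx.2]⟩
  have hHon : ∀ a b, a ∈ Icc (0:ℝ) (2*t) → b ∈ Icc (0:ℝ) (2*t) →
      IntervalIntegrable H volume a b := fun a b ha hb =>
    (hHc.mono (uIcc_subset_Icc ha hb)).intervalIntegrable
  have step2 : (∫ x in (0:ℝ)..t, (H (x + s*t) - H x))
      = (∫ x in (s*t)..(t + s*t), H x) - ∫ x in (0:ℝ)..t, H x := by
    rw [intervalIntegral.integral_sub
      ((hHshift.mono (by rw [uIcc_of_le ht0.le])).intervalIntegrable)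
      (hHon 0 t ⟨le_refl 0, h2t⟩ ⟨ht0.le, by linarith⟩)]
    congr 1
    have := intervalIntegral.integral_comp_add_right (a := (0:ℝ)) (b := t) H (s*t)
    simpa using this
  -- split and cancel
  have m0 : (0:ℝ) ∈ Icc (0:ℝ) (2*t) := ⟨le_refl 0, h2t⟩
  have mst : s*t ∈ Icc (0:ℝ) (2*t) := ⟨hst0, by linarith⟩
  have mt : t ∈ Icc (0:ℝ) (2*t) := ⟨ht0.le, by linarith⟩
  have mtst : t + s*t ∈ Icc (0:ℝ) (2*t) := ⟨by linarith, by linarith⟩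
  have step3 : (∫ x in (s*t)..(t + s*t), H x) - (∫ x in (0:ℝ)..t, H x)
      = (∫ x in t..(t + s*t), H x) - ∫ x in (0:ℝ)..(s*t), H x := by
    rw [← intervalIntegral.integral_add_adjacent_intervals (hHon _ _ mst mt) (hHon _ _ mt mtst),
        ← intervalIntegral.integral_add_adjacent_intervals (hHon _ _ m0 mst) (hHon _ _ mst mt)]
    ring
  -- H = I + F(x - t) on [t, t+st]
  have hHt : ∀ x ∈ Icc t (t + s*t), H x = I + F (x - t) := by
    intro x hx
    have hx1 : t ≤ x := hx.1
    have hx2 : x ≤ t + s*t := hx.2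
    have mx : x ∈ Icc (0:ℝ) (2*t) := ⟨by linarith, by linarith⟩
    have split : H x = (∫ y in (0:ℝ)..t, g y) + ∫ y in t..x, g y :=
      (intervalIntegral.integral_add_adjacent_intervals (hgInt _ _ m0 mt)
        (hgInt _ _ mt mx)).symm
    have e1 : (∫ y in (0:ℝ)..t, g y) = I := by
      refine intervalIntegral.integral_congr fun y hy => ?_
      rw [uIcc_of_le ht0.le] at hy
      rw [hg y, if_pos hy.2]
    have e2 : (∫ y in t..x, g y) = ∫ y in t..x, f (y - t) := by
      refine intervalIntegral.integral_congr_ae (ae_of_all _ fun y hy => ?_)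
      rw [uIoc_of_le hx1] at hy
      rw [hg y, if_neg (not_le.mpr hy.1)]
    have e3 : (∫ y in t..x, f (y - t)) = F (x - t) := by
      have := intervalIntegral.integral_comp_sub_right (a := t) (b := x) f t
      simpa [hF] using this
    rw [split, e1, e2, e3]
  have step4 : (∫ x in t..(t + s*t), H x) = s * t * I + ∫ u in (0:ℝ)..(s*t), F u := by
    have : (∫ x in t..(t + s*t), H x) = ∫ x in t..(t + s*t), (I + F (x - t)) := by
      refine intervalIntegral.integral_congr fun x hx => ?_
      rw [uIcc_of_le (by linarith : t ≤ t + s*t)] at hx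
      exact hHt x hx
    rw [this]
    have hFsh : ContinuousOn (fun x => F (x - t)) (Icc t (t + s*t)) := by
      refine hFc.comp (Continuous.continuousOn (continuous_id.sub continuous_const)) fun x hx => ?_
      simp only [mem_Icc] at hx ⊢
      constructor <;> [linarith [hx.1]; linarith [hx.2]]
    rw [intervalIntegral.integral_add intervalIntegrable_const
      ((hFsh.mono (by rw [uIcc_of_le (by linarith : t ≤ t + s*t)])).intervalIntegrable)]
    congr 1
    · simp [mul_comm]
    · have := intervalIntegral.integral_comp_sub_right (a := t) (b := t + s*t) F t
      simpa using this
  have step5 : (∫ x in (0:ℝ)..(s*t), H x) = ∫ u in (0:ℝ)..(s*t), F u := by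
    refine intervalIntegral.integral_congr fun x hx => ?_
    rw [uIcc_of_le hst0] at hx
    refine intervalIntegral.integral_congr fun y hy => ?_
    rw [uIcc_of_le hx.1] at hy
    rw [hg y, if_pos (by linarith [hy.2, hx.2])]
  have key : (∫ x in (0:ℝ)..t, h x) = s * t * I := by
    rw [step1, step2, step3, step4, step5]; ring
  rw [key, hI]
  field_simp
end

section
/- Given an integrable density function f: [0,1] → [0,1] with associated measure v(D) = ∫_D f, a district D ⊆ [0,1] (a finite union of closed intervals), and s ∈ [0,1], there exist districts D₁, D₂ such that: D₁ ∪ D₂ = D; μ(D₁ ∩ D₂) = 0; μ(D₁) = s·μ(D) and μ(D₂) = (1−s)·μ(D); and v(D₁) = s·v(D) and v(D₂) = (1−s)·v(D), where μ is Lebesgue measure. -/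
open MeasureTheory Set

noncomputable section

/-- A district is a finite union of closed intervals contained in `[0,1]`. -/
def IsDistrict (D : Set ℝ) : Prop :=
  D ⊆ Icc 0 1 ∧ ∃ s : Finset (ℝ × ℝ), D = ⋃ p ∈ s, Icc p.1 p.2

/-- Lebesgue measure of a set, as a real number. -/
def mu (D : Set ℝ) : ℝ := (volume D).toReal

/-- The voter mass of `D` with respect to density `f`. -/
def vmass (f : ℝ → ℝ) (D : Set ℝ) : ℝ := ∫ x in D, f x

lemma IsDistrict.measurableSet {D : Set ℝ} (hD : IsDistrict D) : MeasurableSet D := by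
  obtain ⟨-, t, rfl⟩ := hD
  exact t.measurableSet_biUnion (fun p _ => measurableSet_Icc)

lemma IsDistrict.inter_Icc {D : Set ℝ} (hD : IsDistrict D) (a b : ℝ) :
    IsDistrict (D ∩ Icc a b) := by
  obtain ⟨hsub, t, ht⟩ := hD
  refine ⟨(inter_subset_left).trans hsub, t.image (fun p => (max p.1 a, min p.2 b)), ?_⟩
  rw [ht, Finset.set_biUnion_finset_image]
  rw [iUnion₂_inter]
  exact iUnion₂_congr (fun p _ => Icc_inter_Icc)

lemma IsDistrict.union {D E : Set ℝ} (hD : IsDistrict D) (hE : IsDistrict E) :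
    IsDistrict (D ∪ E) := by
  obtain ⟨hsub, t, rfl⟩ := hD
  obtain ⟨hsub', u, rfl⟩ := hE
  exact ⟨union_subset hsub hsub', t ∪ u, by rw [Finset.set_biUnion_union]⟩

lemma IsDistrict.empty : IsDistrict (∅ : Set ℝ) :=
  ⟨empty_subset _, ∅, by simp⟩

/-- cumulative measure -/
def Fm (D : Set ℝ) (x : ℝ) : ℝ := (volume (D ∩ Icc 0 x)).toReal

/-- cumulative voter mass -/
def Gm (f : ℝ → ℝ) (D : Set ℝ) (x : ℝ) : ℝ := ∫ u in D ∩ Icc 0 x, f u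

lemma Fm_mono {D : Set ℝ} (hfin : volume D ≠ ⊤) {x y : ℝ} (hxy : x ≤ y) :
    Fm D x ≤ Fm D y := by
  apply ENNReal.toReal_mono
  · exact ne_top_of_le_ne_top hfin (measure_mono inter_subset_left)
  · exact measure_mono (inter_subset_inter_right _ (Icc_subset_Icc_right hxy))

lemma Fm_le_add {D : Set ℝ} (hfin : volume D ≠ ⊤) {x y : ℝ} (hxy : x ≤ y) :
    Fm D y ≤ Fm D x + (y - x) := by
  have hsub : D ∩ Icc 0 y ⊆ (D ∩ Icc 0 x) ∪ Icc x y := by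
    intro z ⟨hzD, hz0, hzy⟩
    rcases le_total z x with h | h
    · exact Or.inl ⟨hzD, hz0, h⟩
    · exact Or.inr ⟨h, hzy⟩
  have h1 : volume (D ∩ Icc 0 y) ≤ volume (D ∩ Icc 0 x) + volume (Icc x y) :=
    (measure_mono hsub).trans (measure_union_le _ _)
  have h2 : volume (Icc x y) = ENNReal.ofReal (y - x) := Real.volume_Icc
  have hf1 : volume (D ∩ Icc 0 x) ≠ ⊤ := ne_top_of_le_ne_top hfin (measure_mono inter_subset_left)
  calc Fm D y ≤ (volume (D ∩ Icc 0 x) + volume (Icc x y)).toReal := by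
        apply ENNReal.toReal_mono _ h1
        rw [h2]; exact ENNReal.add_ne_top.mpr ⟨hf1, ENNReal.ofReal_ne_top⟩
    _ = Fm D x + (y - x) := by
        rw [ENNReal.toReal_add hf1 (by rw [h2]; exact ENNReal.ofReal_ne_top), h2,
          ENNReal.toReal_ofReal (by linarith)]
        rfl

lemma Fm_cont {D : Set ℝ} (hfin : volume D ≠ ⊤) : Continuous (Fm D) := by
  apply LipschitzWith.continuous (K := 1)
  apply LipschitzWith.of_dist_le_mul
  intro x y
  rw [Real.dist_eq, Real.dist_eq, NNReal.coe_one, one_mul]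
  rcases le_total x y with h | h
  · have h1 := Fm_mono hfin h
    have h2 := Fm_le_add hfin h
    rw [abs_sub_comm, abs_sub_comm x y, abs_of_nonneg (by linarith), abs_of_nonneg (by linarith)]
    linarith
  · have h1 := Fm_mono hfin h
    have h2 := Fm_le_add hfin h
    rw [abs_of_nonneg (by linarith), abs_of_nonneg (by linarith)]
    linarith

lemma Fm_zero (D : Set ℝ) : Fm D 0 = 0 := by
  have hsub : D ∩ Icc (0:ℝ) 0 ⊆ {0} := by rw [Icc_self]; exact inter_subset_right
  have : volume (D ∩ Icc (0:ℝ) 0) = 0 := measure_mono_null hsub Real.volume_singleton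
  simp only [Fm, this, ENNReal.toReal_zero]

lemma Fm_one {D : Set ℝ} (hD01 : D ⊆ Icc 0 1) : Fm D 1 = mu D := by
  rw [Fm, inter_eq_left.mpr hD01, mu]

lemma Fm_split {D : Set ℝ} (hDm : MeasurableSet D) (hfin : volume D ≠ ⊤)
    {x y : ℝ} (hx : 0 ≤ x) (hxy : x ≤ y) :
    Fm D y = Fm D x + mu (D ∩ Icc x y) := by
  have hA : D ∩ Icc 0 x ∪ D ∩ Icc x y = D ∩ Icc 0 y := by
    rw [← inter_union_distrib_left, Icc_union_Icc_eq_Icc hx hxy]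
  have hI0 : volume ((D ∩ Icc 0 x) ∩ (D ∩ Icc x y)) = 0 := by
    apply measure_mono_null (t := {x}) _ Real.volume_singleton
    rintro z ⟨⟨-, -, h1⟩, -, h2, -⟩
    exact mem_singleton_iff.mpr (le_antisymm h1 h2)
  have := measure_union_add_inter (μ := volume) (t := D ∩ Icc x y) (D ∩ Icc 0 x)
    (hDm.inter measurableSet_Icc)
  rw [hA, hI0, add_zero] at this
  simp only [Fm, mu]
  rw [this, ENNReal.toReal_add
    (ne_top_of_le_ne_top hfin (measure_mono inter_subset_left))
    (ne_top_of_le_ne_top hfin (measure_mono inter_subset_left))]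

lemma int_on {f : ℝ → ℝ} (hmeas : Measurable f)
    (hrange : ∀ x ∈ Icc (0:ℝ) 1, f x ∈ Icc (0:ℝ) 1)
    {S : Set ℝ} (hSm : MeasurableSet S) (hS : S ⊆ Icc 0 1) :
    IntegrableOn f S volume := by
  have hfinS : volume S ≠ ⊤ := by
    refine ne_top_of_le_ne_top ?_ (measure_mono hS)
    simp [Real.volume_Icc]
  apply Measure.integrableOn_of_bounded hfinS hmeas.aestronglyMeasurable (M := 1)
  filter_upwards [ae_restrict_mem hSm] with x hx
  have := hrange x (hS hx)
  rw [Real.norm_eq_abs, abs_le]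
  exact ⟨by linarith [this.1], this.2⟩

lemma int_bound {f : ℝ → ℝ} (hmeas : Measurable f)
    (hrange : ∀ x ∈ Icc (0:ℝ) 1, f x ∈ Icc (0:ℝ) 1)
    {S : Set ℝ} (hS : S ⊆ Icc 0 1) :
    |∫ x in S, f x| ≤ (volume S).toReal := by
  have hfinS : volume S < ⊤ := by
    refine lt_of_le_of_lt (measure_mono hS) ?_
    simp [Real.volume_Icc]
  have := norm_setIntegral_le_of_norm_le_const (f := f) (μ := volume) (C := 1) hfinS
    (fun x hx => by
      have := hrange x (hS hx)
      rw [Real.norm_eq_abs, abs_le]; exact ⟨by linarith [this.1], this.2⟩)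
  simpa [Measure.real] using this

lemma Gm_split {f : ℝ → ℝ} {D : Set ℝ} (hDm : MeasurableSet D)
    (hint : IntegrableOn f D volume)
    {x y : ℝ} (hx : 0 ≤ x) (hxy : x ≤ y) :
    Gm f D y = Gm f D x + ∫ u in D ∩ Icc x y, f u := by
  have hA : D ∩ Icc 0 x ∪ D ∩ Icc x y = D ∩ Icc 0 y := by
    rw [← inter_union_distrib_left, Icc_union_Icc_eq_Icc hx hxy]
  have hI0 : volume ((D ∩ Icc 0 x) ∩ (D ∩ Icc x y)) = 0 := by
    apply measure_mono_null (t := {x}) _ Real.volume_singleton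
    rintro z ⟨⟨-, -, h1⟩, -, h2, -⟩
    exact mem_singleton_iff.mpr (le_antisymm h1 h2)
  have := integral_union_ae (f := f) (μ := volume) (s := D ∩ Icc 0 x) (t := D ∩ Icc x y)
    hI0 (hDm.inter measurableSet_Icc).nullMeasurableSet
    (hint.mono_set inter_subset_left) (hint.mono_set inter_subset_left)
  rw [hA] at this
  exact this

def rho (D : Set ℝ) (y : ℝ) : ℝ := sInf (Icc (0:ℝ) 1 ∩ Fm D ⁻¹' {y})

lemma rho_spec {D : Set ℝ} (hfin : volume D ≠ ⊤) (hD01 : D ⊆ Icc 0 1)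
    {y : ℝ} (hy : y ∈ Icc 0 (mu D)) :
    rho D y ∈ Icc (0:ℝ) 1 ∧ Fm D (rho D y) = y := by
  have hne : (Icc (0:ℝ) 1 ∩ Fm D ⁻¹' {y}).Nonempty := by
    obtain ⟨x, hx, hfx⟩ := intermediate_value_Icc (by norm_num : (0:ℝ) ≤ 1)
      (Fm_cont hfin).continuousOn
      (show y ∈ Icc (Fm D 0) (Fm D 1) by rw [Fm_zero, Fm_one hD01]; exact hy)
    exact ⟨x, hx, hfx⟩
  have hcl : IsClosed (Icc (0:ℝ) 1 ∩ Fm D ⁻¹' {y}) :=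
    isClosed_Icc.inter (isClosed_singleton.preimage (Fm_cont hfin))
  have hbdd : BddBelow (Icc (0:ℝ) 1 ∩ Fm D ⁻¹' {y}) :=
    (bddBelow_Icc : BddBelow (Icc (0:ℝ) 1)).mono inter_subset_left
  have hmem := hcl.csInf_mem hne hbdd
  exact ⟨hmem.1, hmem.2⟩

lemma rho_mono {D : Set ℝ} (hfin : volume D ≠ ⊤) (hD01 : D ⊆ Icc 0 1)
    {y z : ℝ} (h0 : 0 ≤ y) (hyz : y ≤ z) (hzL : z ≤ mu D) :
    rho D y ≤ rho D z := by
  obtain ⟨hzm, hFz⟩ := rho_spec hfin hD01 (mem_Icc.mpr ⟨h0.trans hyz, hzL⟩)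
  rw [mem_Icc] at hzm
  obtain ⟨x, hx, hfx⟩ := intermediate_value_Icc hzm.1 (Fm_cont hfin).continuousOn
    (show y ∈ Icc (Fm D 0) (Fm D (rho D z)) by rw [Fm_zero, hFz]; exact ⟨h0, hyz⟩)
  rw [mem_Icc] at hx
  have hxmem : x ∈ Icc (0:ℝ) 1 ∩ Fm D ⁻¹' {y} := ⟨⟨hx.1, hx.2.trans hzm.2⟩, hfx⟩
  exact (csInf_le ((bddBelow_Icc : BddBelow (Icc (0:ℝ) 1)).mono inter_subset_left) hxmem).trans hx.2

lemma chord_exists (L s : ℝ) (hL : 0 < L) (hs : s ∈ Icc (0:ℝ) 1) (Hc : ℝ → ℝ)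
    (hcont : Continuous Hc) (h0 : Hc 0 = 0) (hLv : Hc L = 0) :
    ∃ σ y₁ y₂ : ℝ, (σ = s ∨ σ = 1 - s) ∧ 0 ≤ y₁ ∧ y₁ ≤ y₂ ∧ y₂ ≤ L ∧
      y₂ - y₁ = σ * L ∧ Hc y₁ = Hc y₂ := by
  classical
  set Hh : ℝ → ℝ := fun y => if y ≤ L then Hc y else Hc (y - L) with hHh
  have hHhcont : Continuous Hh := by
    apply Continuous.if_le hcont (hcont.comp (continuous_id.sub continuous_const))
      continuous_id continuous_const
    intro y hy
    simp only [id_eq] at hy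
    simp only [Function.comp_apply, Pi.sub_apply, id_eq, hy, sub_self, h0, hLv]
  have hsL0 : 0 ≤ s * L := mul_nonneg hs.1 hL.le
  have hsLL : s * L ≤ L := by nlinarith [hs.2]
  obtain ⟨a, haI, hamax⟩ := isCompact_Icc.exists_isMaxOn (nonempty_Icc.mpr hL.le)
    hHhcont.continuousOn
  obtain ⟨b, hbI, hbmin⟩ := isCompact_Icc.exists_isMinOn (nonempty_Icc.mpr hL.le)
    hHhcont.continuousOn
  rw [mem_Icc] at haI hbI
  have hext_max : ∀ y, 0 ≤ y → y ≤ L + L → Hh y ≤ Hh a := by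
    intro y h0y hy2
    by_cases h : y ≤ L
    · exact hamax (mem_Icc.mpr ⟨h0y, h⟩)
    · have h1 : Hh y = Hh (y - L) := by
        have : Hh (y - L) = Hc (y - L) := if_pos (by linarith)
        rw [this, hHh]; simp only []
        rw [if_neg h]
      rw [h1]
      exact hamax (mem_Icc.mpr ⟨by linarith [not_le.mp h], by linarith⟩)
  have hext_min : ∀ y, 0 ≤ y → y ≤ L + L → Hh b ≤ Hh y := by
    intro y h0y hy2
    by_cases h : y ≤ L
    · exact hbmin (mem_Icc.mpr ⟨h0y, h⟩)
    · have h1 : Hh y = Hh (y - L) := by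
        have : Hh (y - L) = Hc (y - L) := if_pos (by linarith)
        rw [this, hHh]; simp only []
        rw [if_neg h]
      rw [h1]
      exact hbmin (mem_Icc.mpr ⟨by linarith [not_le.mp h], by linarith⟩)
  set Φ : ℝ → ℝ := fun c => Hh (c + s * L) - Hh c with hΦ
  have hΦcont : Continuous Φ :=
    Continuous.sub (hHhcont.comp (continuous_id.add continuous_const)) hHhcont
  have hΦa : Φ a ≤ 0 := by
    have := hext_max (a + s * L) (by linarith) (by linarith)
    simp only [hΦ]
    linarith [hamax (mem_Icc.mpr haI)]
  have hΦb : 0 ≤ Φ b := by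
    have := hext_min (b + s * L) (by linarith) (by linarith)
    simp only [hΦ]
    linarith
  have h0mem : (0:ℝ) ∈ uIcc (Φ a) (Φ b) := mem_uIcc.mpr (Or.inl ⟨hΦa, hΦb⟩)
  obtain ⟨c, hc, hΦc⟩ := intermediate_value_uIcc hΦcont.continuousOn h0mem
  have hcI : c ∈ Icc 0 L := by
    have : uIcc a b ⊆ Icc 0 L := by
      rw [uIcc]
      apply Icc_subset_Icc (le_min haI.1 hbI.1) (max_le haI.2 hbI.2)
    exact this hc
  rw [mem_Icc] at hcI
  have heq : Hh (c + s * L) = Hh c := by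
    have : Φ c = 0 := hΦc
    simp only [hΦ] at this
    linarith
  have hHhc : Hh c = Hc c := if_pos hcI.2
  by_cases hcase : c + s * L ≤ L
  · refine ⟨s, c, c + s * L, Or.inl rfl, hcI.1, by linarith, hcase, by ring, ?_⟩
    have : Hh (c + s * L) = Hc (c + s * L) := if_pos hcase
    rw [← hHhc, ← this, heq]
  · refine ⟨1 - s, c + s * L - L, c, Or.inr rfl, by linarith [not_le.mp hcase],
      by linarith, hcI.2, by ring, ?_⟩
    have : Hh (c + s * L) = Hc (c + s * L - L) := if_neg hcase
    rw [← this, heq, hHhc]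

/-- Proportional cutting lemma: any district can be split into two districts of
prescribed measures `s·μ(D)` and `(1-s)·μ(D)`, each carrying the proportional
share of the voter mass. -/
theorem district_proportional_cut (f : ℝ → ℝ) (hmeas : Measurable f)
    (hrange : ∀ x ∈ Icc (0:ℝ) 1, f x ∈ Icc (0:ℝ) 1)
    (D : Set ℝ) (hD : IsDistrict D) (s : ℝ) (hs : s ∈ Icc (0:ℝ) 1) :
    ∃ D₁ D₂ : Set ℝ, IsDistrict D₁ ∧ IsDistrict D₂ ∧
      D₁ ∪ D₂ = D ∧ mu (D₁ ∩ D₂) = 0 ∧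
      mu D₁ = s * mu D ∧ mu D₂ = (1 - s) * mu D ∧
      vmass f D₁ = s * vmass f D ∧ vmass f D₂ = (1 - s) * vmass f D := by
  have hD01 : D ⊆ Icc 0 1 := hD.1
  have hDm : MeasurableSet D := hD.measurableSet
  have hfin : volume D ≠ ⊤ := by
    refine ne_top_of_le_ne_top ?_ (measure_mono hD01)
    simp [Real.volume_Icc]
  by_cases hL : mu D = 0
  · -- trivial case: D is null
    have hv0 : volume D = 0 := by
      rcases (ENNReal.toReal_eq_zero_iff _).mp hL with h | h
      · exact h
      · exact absurd h hfin
    have hvm : vmass f D = 0 := by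
      rw [vmass, Measure.restrict_eq_zero.mpr hv0, integral_zero_measure]
    refine ⟨D, ∅, hD, IsDistrict.empty, union_empty D, ?_, ?_, ?_, ?_, ?_⟩
    · rw [inter_empty]; simp [mu]
    · rw [hL]; ring
    · rw [hL, mul_zero]; simp [mu]
    · rw [hvm, mul_zero]
    · rw [hvm, mul_zero]; simp [vmass]
  · have hL0 : 0 < mu D := lt_of_le_of_ne ENNReal.toReal_nonneg (Ne.symm hL)
    set L : ℝ := mu D with hLdef
    set v : ℝ := vmass f D with hvdef
    have hintD : IntegrableOn f D volume := int_on hmeas hrange hDm hD01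
    set K : ℝ → ℝ := fun x => Gm f D x - (v / L) * Fm D x with hK
    set C : ℝ := 1 + |v / L| with hC
    have hC0 : (0:ℝ) ≤ C := by positivity
    -- Lipschitz-type estimate for K in terms of Fm
    have hKF : ∀ x y : ℝ, 0 ≤ x → x ≤ y → |K y - K x| ≤ C * (Fm D y - Fm D x) := by
      intro x y h0x hxy
      have hf := Fm_split hDm hfin h0x hxy
      have hg := Gm_split hDm hintD h0x hxy
      have hb : |∫ u in D ∩ Icc x y, f u| ≤ mu (D ∩ Icc x y) := by
        have := int_bound hmeas hrange (S := D ∩ Icc x y) (inter_subset_left.trans hD01)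
        exact this
      have hm0 : 0 ≤ mu (D ∩ Icc x y) := ENNReal.toReal_nonneg
      have heq : K y - K x = (∫ u in D ∩ Icc x y, f u) - (v / L) * mu (D ∩ Icc x y) := by
        simp only [hK]
        rw [hg, hf]; ring
      rw [heq, hf]
      have h1 : |(∫ u in D ∩ Icc x y, f u) - (v / L) * mu (D ∩ Icc x y)| ≤
          |∫ u in D ∩ Icc x y, f u| + |(v / L) * mu (D ∩ Icc x y)| := by
        rw [sub_eq_add_neg]
        exact (abs_add_le _ _).trans (by rw [abs_neg])
      have h2 : |(v / L) * mu (D ∩ Icc x y)| = |v / L| * mu (D ∩ Icc x y) := by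
        rw [abs_mul, abs_of_nonneg hm0]
      have h3 : Fm D x + mu (D ∩ Icc x y) - Fm D x = mu (D ∩ Icc x y) := by ring
      rw [h3]
      calc |(∫ u in D ∩ Icc x y, f u) - (v / L) * mu (D ∩ Icc x y)|
          ≤ |∫ u in D ∩ Icc x y, f u| + |(v / L) * mu (D ∩ Icc x y)| := h1
        _ ≤ mu (D ∩ Icc x y) + |v / L| * mu (D ∩ Icc x y) := by rw [h2]; linarith
        _ = C * mu (D ∩ Icc x y) := by rw [hC]; ring
    have hKF' : ∀ x y : ℝ, 0 ≤ x → 0 ≤ y → |K y - K x| ≤ C * |Fm D y - Fm D x| := by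
      intro x y h0x h0y
      rcases le_total x y with h | h
      · exact (hKF x y h0x h).trans (mul_le_mul_of_nonneg_left (le_abs_self _) hC0)
      · rw [abs_sub_comm (K y), abs_sub_comm (Fm D y)]
        exact (hKF y x h0y h).trans (mul_le_mul_of_nonneg_left (le_abs_self _) hC0)
    -- values of K at levels 0 and L
    have hG0 : Gm f D 0 = 0 := by
      have hsub : D ∩ Icc (0:ℝ) 0 ⊆ {0} := by rw [Icc_self]; exact inter_subset_right
      have h0 : volume (D ∩ Icc (0:ℝ) 0) = 0 := measure_mono_null hsub Real.volume_singleton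
      rw [Gm, Measure.restrict_eq_zero.mpr h0, integral_zero_measure]
    have hK0 : K 0 = 0 := by
      simp only [hK]
      rw [hG0, Fm_zero]; ring
    have hK1 : K 1 = 0 := by
      simp only [hK]
      rw [Fm_one hD01, ← hLdef]
      have : Gm f D 1 = v := by
        rw [Gm, inter_eq_left.mpr hD01, hvdef, vmass]
      rw [this, div_mul_cancel₀ v hL]
      ring
    have hKlevel : ∀ x : ℝ, 0 ≤ x → Fm D x = 0 → K x = 0 := by
      intro x h0x hFx
      have := hKF' 0 x (le_refl 0) h0x
      rw [hFx, Fm_zero, hK0] at this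
      simp at this
      linarith [abs_nonneg (K x - 0), this]
    have hKlevelL : ∀ x : ℝ, 0 ≤ x → Fm D x = L → K x = 0 := by
      intro x h0x hFx
      have := hKF' 1 x (by norm_num) h0x
      rw [hFx, Fm_one hD01, ← hLdef, hK1] at this
      simp at this
      linarith [abs_nonneg (K x - 0), this]
    -- the clamped function
    set Hcf : ℝ → ℝ := fun y => K (rho D (max 0 (min y L))) with hHcf
    have hclamp_mem : ∀ y : ℝ, max 0 (min y L) ∈ Icc 0 L := by
      intro y
      exact ⟨le_max_left _ _, max_le hL0.le (min_le_right _ _)⟩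
    have hclamp_eq : ∀ y ∈ Icc (0:ℝ) L, max 0 (min y L) = y := by
      intro y hy
      rw [min_eq_left hy.2, max_eq_right hy.1]
    have hclamp_lip : ∀ y z : ℝ, |max 0 (min y L) - max 0 (min z L)| ≤ |y - z| := by
      intro y z
      have h1 : |max 0 (min y L) - max 0 (min z L)| ≤ |min y L - min z L| := by
        rw [max_comm 0 (min y L), max_comm 0 (min z L)]
        exact abs_max_sub_max_le_abs _ _ _
      have h2 : |min y L - min z L| ≤ max |y - z| |L - L| := abs_min_sub_min_le_max y L z L
      rw [sub_self, abs_zero, max_eq_left (abs_nonneg _)] at h2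
      linarith
    have hHcfK : ∀ y ∈ Icc (0:ℝ) L, Hcf y = K (rho D y) := by
      intro y hy
      simp only [hHcf]
      rw [hclamp_eq y hy]
    have hHcflip : ∀ y z : ℝ, |Hcf y - Hcf z| ≤ C * |y - z| := by
      intro y z
      have hmy := rho_spec hfin hD01 (hclamp_mem y)
      have hmz := rho_spec hfin hD01 (hclamp_mem z)
      have h1 := hKF' (rho D (max 0 (min z L))) (rho D (max 0 (min y L))) hmz.1.1 hmy.1.1
      rw [hmy.2, hmz.2] at h1
      exact h1.trans (mul_le_mul_of_nonneg_left (hclamp_lip y z) hC0)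
    have hHcfcont : Continuous Hcf := by
      apply LipschitzWith.continuous (K := C.toNNReal)
      apply LipschitzWith.of_dist_le_mul
      intro y z
      rw [Real.dist_eq, Real.dist_eq, Real.coe_toNNReal _ hC0]
      exact hHcflip y z
    have hHcf0 : Hcf 0 = 0 := by
      rw [hHcfK 0 ⟨le_refl 0, hL0.le⟩]
      have hr := rho_spec hfin hD01 (mem_Icc.mpr ⟨le_refl 0, hL0.le⟩)
      exact hKlevel _ hr.1.1 hr.2
    have hHcfL : Hcf L = 0 := by
      rw [hHcfK L ⟨hL0.le, le_refl L⟩]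
      have hr := rho_spec hfin hD01 (mem_Icc.mpr ⟨hL0.le, le_refl L⟩)
      exact hKlevelL _ hr.1.1 hr.2
    -- apply the chord lemma
    obtain ⟨σ, y₁, y₂, hσ, h0y₁, hy₁₂, hy₂L, hdiff, hKeq⟩ :=
      chord_exists L s hL0 hs Hcf hHcfcont hHcf0 hHcfL
    have hy₁mem : y₁ ∈ Icc 0 L := ⟨h0y₁, hy₁₂.trans hy₂L⟩
    have hy₂mem : y₂ ∈ Icc 0 L := ⟨h0y₁.trans hy₁₂, hy₂L⟩
    set x₁ : ℝ := rho D y₁ with hx₁def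
    set x₂ : ℝ := rho D y₂ with hx₂def
    obtain ⟨hx₁mem, hFx₁⟩ := rho_spec hfin hD01 hy₁mem
    obtain ⟨hx₂mem, hFx₂⟩ := rho_spec hfin hD01 hy₂mem
    rw [mem_Icc] at hx₁mem hx₂mem
    have hx₁₂ : x₁ ≤ x₂ := rho_mono hfin hD01 h0y₁ hy₁₂ hy₂L
    have hKx : K x₂ - K x₁ = 0 := by
      rw [hHcfK y₁ hy₁mem, hHcfK y₂ hy₂mem] at hKeq
      rw [← hx₁def, ← hx₂def] at hKeq
      linarith [hKeq]
    -- the two pieces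
    set W : Set ℝ := D ∩ Icc x₁ x₂ with hW
    set E : Set ℝ := (D ∩ Icc 0 x₁) ∪ (D ∩ Icc x₂ 1) with hE
    have hWd : IsDistrict W := hD.inter_Icc x₁ x₂
    have hEd : IsDistrict E := (hD.inter_Icc 0 x₁).union (hD.inter_Icc x₂ 1)
    have hWm : MeasurableSet W := hDm.inter measurableSet_Icc
    have hEm : MeasurableSet E :=
      (hDm.inter measurableSet_Icc).union (hDm.inter measurableSet_Icc)
    have hWsub : W ⊆ Icc 0 1 := inter_subset_left.trans hD01
    have hEsub : E ⊆ Icc 0 1 :=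
      union_subset (inter_subset_left.trans hD01) (inter_subset_left.trans hD01)
    -- measure of W
    have hmuW : mu W = σ * L := by
      have := Fm_split hDm hfin hx₁mem.1 hx₁₂
      rw [hFx₁, hFx₂] at this
      rw [← hW] at this
      linarith [hdiff, this]
    -- voter mass of W
    have hvW : vmass f W = σ * v := by
      have hg := Gm_split hDm hintD hx₁mem.1 hx₁₂
      have hKdiff : K x₂ - K x₁ = (Gm f D x₂ - Gm f D x₁) - (v / L) * (Fm D x₂ - Fm D x₁) := by
        simp only [hK]; ring
      rw [hKx] at hKdiff
      rw [hFx₁, hFx₂, hdiff] at hKdiff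
      have hGdiff : Gm f D x₂ - Gm f D x₁ = (v / L) * (σ * L) := by linarith
      have : vmass f W = Gm f D x₂ - Gm f D x₁ := by
        rw [vmass, hW]
        linarith [hg]
      rw [this, hGdiff]
      field_simp
    -- union
    have hUn : W ∪ E = D := by
      apply Subset.antisymm
      · exact union_subset inter_subset_left (union_subset inter_subset_left inter_subset_left)
      · intro z hz
        obtain ⟨hz0, hz1⟩ := hD01 hz
        rcases le_total z x₁ with h | h
        · exact Or.inr (Or.inl ⟨hz, hz0, h⟩)
        · rcases le_total z x₂ with h' | h'
          · exact Or.inl ⟨hz, h, h'⟩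
          · exact Or.inr (Or.inr ⟨hz, h', hz1⟩)
    -- null intersection
    have hWE0 : volume (W ∩ E) = 0 := by
      apply measure_mono_null (t := {x₁} ∪ {x₂})
      · rintro z ⟨⟨-, hz1, hz2⟩, hzE⟩
        rcases hzE with ⟨-, -, h⟩ | ⟨-, h, -⟩
        · exact Or.inl (mem_singleton_iff.mpr (le_antisymm h hz1))
        · exact Or.inr (mem_singleton_iff.mpr (le_antisymm hz2 h))
      · exact measure_union_null Real.volume_singleton Real.volume_singleton
    have hIm : mu (W ∩ E) = 0 := by rw [mu, hWE0, ENNReal.toReal_zero]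
    -- measure of E
    have hμsum : volume W + volume E = volume D := by
      have := measure_union_add_inter (μ := volume) (t := E) W hEm
      rw [hUn, hWE0, add_zero] at this
      exact this.symm
    have hfinW : volume W ≠ ⊤ := by
      refine ne_top_of_le_ne_top ?_ (measure_mono hWsub)
      simp [Real.volume_Icc]
    have hfinE : volume E ≠ ⊤ := by
      refine ne_top_of_le_ne_top ?_ (measure_mono hEsub)
      simp [Real.volume_Icc]
    have hmuE : mu E = (1 - σ) * L := by
      have h2 : mu W + mu E = L := by
        rw [hLdef, mu, mu, mu, ← ENNReal.toReal_add hfinW hfinE, hμsum]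
      rw [hmuW] at h2
      linarith
    -- voter mass of E
    have hvsum : vmass f W + vmass f E = v := by
      have := integral_union_ae (f := f) (μ := volume) (s := W) (t := E)
        hWE0 hEm.nullMeasurableSet
        (int_on hmeas hrange hWm hWsub) (int_on hmeas hrange hEm hEsub)
      rw [hUn] at this
      rw [vmass, vmass, hvdef, vmass, this]
    have hvE : vmass f E = (1 - σ) * v := by
      rw [hvW] at hvsum
      linarith
    -- conclude, according to which proportion σ is
    rcases hσ with rfl | rfl
    · exact ⟨W, E, hWd, hEd, hUn, hIm, hmuW, hmuE, hvW, hvE⟩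
    · refine ⟨E, W, hEd, hWd, ?_, ?_, ?_, ?_, ?_, ?_⟩
      · rw [union_comm]; exact hUn
      · rw [inter_comm]; exact hIm
      · rw [hmuE]; ring
      · rw [hmuW]
      · rw [hvE]; ring
      · rw [hvW]
end
end

section
/- Fix m ≥ 1 and an integrable density f: [0,1] → [0,1] with v(D) = ∫_D f. Call a district D competitive if v(D) = μ(D)/2, and let m* be the largest integer k such that there exists a competitive district of measure k/m. If Y is a district such that one of the quantities v(Y) − μ(Y)/2 and v([0,1]) − 1/2 is ≥ 0 and the other is ≤ 0, then μ(Y) < (m*+1)/m. -/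
open MeasureTheory Set

noncomputable section

lemma IsDistrict.measurableSet_s4 {A : Set ℝ} (hA : IsDistrict A) : MeasurableSet A := by
  obtain ⟨-, s, rfl⟩ := hA
  exact s.measurableSet_biUnion fun p _ => measurableSet_Icc

lemma IsDistrict.union_s4 {A B : Set ℝ} (hA : IsDistrict A) (hB : IsDistrict B) :
    IsDistrict (A ∪ B) := by
  obtain ⟨hA1, sA, rfl⟩ := hA
  obtain ⟨hB1, sB, rfl⟩ := hB
  exact ⟨Set.union_subset hA1 hB1, sA ∪ sB, (Finset.set_biUnion_union sA sB _).symm⟩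

lemma IsDistrict.inter_Icc_s4 {A : Set ℝ} (hA : IsDistrict A) (c d : ℝ) :
    IsDistrict (A ∩ Icc c d) := by
  obtain ⟨hA1, s, rfl⟩ := hA
  refine ⟨Set.inter_subset_left.trans hA1, s.image (fun p => (max p.1 c, min p.2 d)), ?_⟩
  ext x
  simp only [Set.mem_inter_iff, Set.mem_iUnion, Finset.mem_image, exists_prop, Set.mem_Icc,
    exists_exists_and_eq_and, max_le_iff, le_min_iff]
  tauto

lemma isDistrict_Icc {c d : ℝ} (h0 : 0 ≤ c) (h1 : d ≤ 1) : IsDistrict (Icc c d) :=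
  ⟨fun x hx => ⟨h0.trans hx.1, hx.2.trans h1⟩, {(c, d)}, by simp⟩

/-- If `Y` is a district such that `v(Y) - μ(Y)/2` and `v([0,1]) - 1/2` have
opposite (weak) signs, then `μ(Y) < (m*+1)/m`, where `m*` is the largest
integer `k` such that some competitive district has measure `k/m`. -/
theorem measure_lt_of_opposite_signs (m : ℕ) (hm : 1 ≤ m)
    (f : ℝ → ℝ) (hmeas : Measurable f)
    (hrange : ∀ x ∈ Icc (0:ℝ) 1, f x ∈ Icc (0:ℝ) 1)
    (mstar : ℕ)
    (hex : ∃ D, IsDistrict D ∧ vmass f D = mu D / 2 ∧ mu D = (mstar : ℝ) / m)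
    (hmax : ∀ k : ℕ,
      (∃ D, IsDistrict D ∧ vmass f D = mu D / 2 ∧ mu D = (k : ℝ) / m) → k ≤ mstar)
    (Y : Set ℝ) (hY : IsDistrict Y)
    (hsign : (0 ≤ vmass f Y - mu Y / 2 ∧ vmass f (Icc 0 1) - 1 / 2 ≤ 0) ∨
             (vmass f Y - mu Y / 2 ≤ 0 ∧ 0 ≤ vmass f (Icc 0 1) - 1 / 2)) :
    mu Y < ((mstar : ℝ) + 1) / m := by
  clear hex
  by_contra hcon
  push_neg at hcon
  set s : ℝ := ((mstar : ℝ) + 1) / m with hs_def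
  have hmpos : (0:ℝ) < m := by exact_mod_cast Nat.lt_of_lt_of_le Nat.zero_lt_one hm
  have hspos : 0 < s := div_pos (by positivity) hmpos
  have hIccvol : volume (Icc (0:ℝ) 1) = 1 := by simp [Real.volume_Icc]
  have hfin : ∀ {A : Set ℝ}, A ⊆ Icc 0 1 → volume A ≠ ⊤ := fun h =>
    (lt_of_le_of_lt (measure_mono h) (by rw [hIccvol]; exact ENNReal.one_lt_top)).ne
  have hmu_mono : ∀ {A B : Set ℝ}, A ⊆ B → B ⊆ Icc 0 1 → mu A ≤ mu B := fun hAB hB =>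
    ENNReal.toReal_mono (hfin hB) (measure_mono hAB)
  have hmu01 : mu (Icc (0:ℝ) 1) = 1 := by rw [mu, hIccvol, ENNReal.toReal_one]
  -- integrability
  have hint01 : IntegrableOn f (Icc 0 1) := by
    refine Integrable.mono' (g := fun _ => (1:ℝ))
      (integrableOn_const (ne_of_lt (by rw [hIccvol]; exact ENNReal.one_lt_top)))
      hmeas.aestronglyMeasurable.restrict ?_
    refine (ae_restrict_iff' measurableSet_Icc).2 (Filter.Eventually.of_forall fun x hx => ?_)
    have h := hrange x hx
    have hb : ‖f x‖ ≤ 1 := by rw [Real.norm_eq_abs, abs_le]; exact ⟨by linarith [h.1], h.2⟩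
    simpa using hb
  have hintOn : ∀ {A : Set ℝ}, A ⊆ Icc 0 1 → IntegrableOn f A := fun h => hint01.mono_set h
  -- stage 1 : find a competitive district E ⊇ Y
  set g0 : ℝ → ℝ := (Icc 0 1 ∩ Yᶜ).indicator (fun z => f z - 1/2) with hg0_def
  have hg0set : MeasurableSet (Icc (0:ℝ) 1 ∩ Yᶜ) :=
    measurableSet_Icc.inter hY.measurableSet_s4.compl
  have hg0int : Integrable g0 := by
    have h1 : IntegrableOn (fun z => f z - 1/2) (Icc 0 1 ∩ Yᶜ) := by
      apply Integrable.sub (hintOn inter_subset_left)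
      exact integrableOn_const (ne_of_lt (lt_of_le_of_lt (measure_mono inter_subset_left)
        (by rw [hIccvol]; exact ENNReal.one_lt_top)))
    exact h1.integrable_indicator hg0set
  set ψ : ℝ → ℝ := fun t => ∫ u in (0:ℝ)..t, g0 u with hψ_def
  have hψcont : Continuous ψ := hg0int.continuous_primitive 0
  have hdecomp : ∀ t ∈ Icc (0:ℝ) 1,
      vmass f (Y ∪ Icc 0 t) - mu (Y ∪ Icc 0 t) / 2 = (vmass f Y - mu Y / 2) + ψ t := by
    intro t ht
    have hsub2 : Icc 0 t \ Y ⊆ Icc 0 1 := diff_subset.trans (Icc_subset_Icc le_rfl ht.2)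
    have hmt : MeasurableSet (Icc 0 t \ Y) := measurableSet_Icc.diff hY.measurableSet_s4
    have hUeq : Y ∪ Icc 0 t = Y ∪ (Icc 0 t \ Y) := (union_diff_self).symm
    have hdisj : Disjoint Y (Icc 0 t \ Y) := disjoint_sdiff_self_right
    have hv : vmass f (Y ∪ Icc 0 t) = vmass f Y + ∫ x in Icc 0 t \ Y, f x := by
      rw [vmass, hUeq, setIntegral_union hdisj hmt (hintOn hY.1) (hintOn hsub2)]; rfl
    have hmu : mu (Y ∪ Icc 0 t) = mu Y + (volume (Icc 0 t \ Y)).toReal := by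
      rw [mu, hUeq, measure_union hdisj hmt, ENNReal.toReal_add (hfin hY.1) (hfin hsub2)]; rfl
    have hψt : ψ t = (∫ x in Icc 0 t \ Y, f x) - (volume (Icc 0 t \ Y)).toReal / 2 := by
      have h1 : Ioc (0:ℝ) t ⊆ Icc 0 1 := fun x hx => ⟨le_of_lt hx.1, hx.2.trans ht.2⟩
      have hseq : Ioc 0 t ∩ (Icc 0 1 ∩ Yᶜ) = Ioc 0 t \ Y := by
        rw [← inter_assoc, inter_eq_self_of_subset_left h1, ← diff_eq]
      have haeq : (Ioc 0 t \ Y : Set ℝ) =ᵐ[volume] (Icc 0 t \ Y : Set ℝ) := by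
        rw [diff_eq, diff_eq]
        exact ae_eq_set_inter Ioc_ae_eq_Icc Filter.EventuallyEq.rfl
      rw [hψ_def]
      simp only []
      rw [intervalIntegral.integral_of_le ht.1, hg0_def, setIntegral_indicator hg0set, hseq,
        setIntegral_congr_set haeq,
        integral_sub (hintOn hsub2) (integrableOn_const (ne_of_lt
          (lt_of_le_of_lt (measure_mono hsub2) (by rw [hIccvol]; exact ENNReal.one_lt_top)))),
        setIntegral_const, smul_eq_mul, Measure.real]
      ring
    rw [hv, hmu, hψt]; ring
  have hh0 : vmass f Y - mu Y / 2 + ψ 0 = vmass f Y - mu Y / 2 := by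
    simp [hψ_def]
  have hh1 : vmass f Y - mu Y / 2 + ψ 1 = vmass f (Icc 0 1) - 1/2 := by
    have h := hdecomp 1 ⟨zero_le_one, le_rfl⟩
    rw [union_eq_self_of_subset_left hY.1, hmu01] at h
    linarith
  have hIVT : ∃ t ∈ Icc (0:ℝ) 1, vmass f Y - mu Y / 2 + ψ t = 0 := by
    have hcont : ContinuousOn (fun t => vmass f Y - mu Y / 2 + ψ t) (uIcc (0:ℝ) 1) :=
      (continuous_const.add hψcont).continuousOn
    have hmem : (0:ℝ) ∈ uIcc (vmass f Y - mu Y / 2 + ψ 0) (vmass f Y - mu Y / 2 + ψ 1) := by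
      rw [hh0, hh1, Set.mem_uIcc]
      rcases hsign with ⟨h1, h2⟩ | ⟨h1, h2⟩
      · right; exact ⟨by linarith, by linarith⟩
      · left; exact ⟨by linarith, by linarith⟩
    obtain ⟨t, ht, h⟩ := intermediate_value_uIcc hcont hmem
    exact ⟨t, by rwa [Set.uIcc_of_le zero_le_one] at ht, h⟩
  obtain ⟨t0, ht0, hroot⟩ := hIVT
  set E : Set ℝ := Y ∪ Icc 0 t0 with hE_def
  have hEd : IsDistrict E := hY.union_s4 (isDistrict_Icc le_rfl ht0.2)
  have hEsub : E ⊆ Icc 0 1 := hEd.1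
  have hEm : MeasurableSet E := hEd.measurableSet_s4
  have hEcomp : vmass f E = mu E / 2 := by
    have h := hdecomp t0 ht0
    rw [hroot] at h
    linarith
  set a : ℝ := mu E with ha_def
  have ha1 : a ≤ 1 := by
    rw [ha_def, ← hmu01]; exact hmu_mono hEsub Subset.rfl
  have hsa : s ≤ a := le_trans hcon (hmu_mono subset_union_left hEsub)
  have ha0 : 0 < a := lt_of_lt_of_le hspos hsa
  -- stage 2 : cut E into a competitive district of measure exactly s
  set q : ℝ → ℝ := E.indicator f with hq_def
  set p : ℝ → ℝ := E.indicator (fun _ => (1:ℝ)) with hp_def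
  have hqint : Integrable q := (hintOn hEsub).integrable_indicator hEm
  have hpint : Integrable p := by
    refine (integrableOn_const (ne_of_lt ?_)).integrable_indicator hEm
    exact lt_of_le_of_lt (measure_mono hEsub) (by rw [hIccvol]; exact ENNReal.one_lt_top)
  have hq0 : ∀ u, 0 ≤ q u := by
    intro u; rw [hq_def]
    by_cases h : u ∈ E
    · rw [indicator_of_mem h]; exact (hrange u (hEsub h)).1
    · rw [indicator_of_notMem h]
  have hp0 : ∀ u, 0 ≤ p u := by
    intro u; rw [hp_def]
    by_cases h : u ∈ E
    · rw [indicator_of_mem h]; exact zero_le_one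
    · rw [indicator_of_notMem h]
  have hqp : ∀ u, q u ≤ p u := by
    intro u
    by_cases h : u ∈ E
    · rw [hq_def, hp_def, indicator_of_mem h, indicator_of_mem h]
      exact (hrange u (hEsub h)).2
    · rw [hq_def, hp_def, indicator_of_notMem h, indicator_of_notMem h]
  set P : ℝ → ℝ := fun x => ∫ u in (0:ℝ)..x, p u with hP_def
  set V : ℝ → ℝ := fun x => ∫ u in (0:ℝ)..x, q u with hV_def
  have hPcont : Continuous P := hpint.continuous_primitive 0
  have hP0 : P 0 = 0 := intervalIntegral.integral_same
  have hV0 : V 0 = 0 := intervalIntegral.integral_same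
  have hPx : ∀ x y : ℝ, P y - P x = ∫ u in x..y, p u := by
    intro x y
    have h := intervalIntegral.integral_add_adjacent_intervals
      (hpint.intervalIntegrable (a := 0) (b := x)) (hpint.intervalIntegrable (a := x) (b := y))
    rw [hP_def]; simp only []; linarith
  have hVx : ∀ x y : ℝ, V y - V x = ∫ u in x..y, q u := by
    intro x y
    have h := intervalIntegral.integral_add_adjacent_intervals
      (hqint.intervalIntegrable (a := 0) (b := x)) (hqint.intervalIntegrable (a := x) (b := y))
    rw [hV_def]; simp only []; linarith
  have hae : ∀ x y : ℝ, (E ∩ Icc x y : Set ℝ) =ᵐ[volume] (Ioc x y ∩ E : Set ℝ) := by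
    intro x y
    rw [inter_comm (Ioc x y) E]
    exact ae_eq_set_inter Filter.EventuallyEq.rfl Ioc_ae_eq_Icc.symm
  have hwin_mu : ∀ x y : ℝ, x ≤ y → mu (E ∩ Icc x y) = P y - P x := by
    intro x y h
    rw [hPx x y, intervalIntegral.integral_of_le h, hp_def, setIntegral_indicator hEm,
      setIntegral_const, smul_eq_mul, mul_one, mu, measure_congr (hae x y)]
    rfl
  have hwin_v : ∀ x y : ℝ, x ≤ y → vmass f (E ∩ Icc x y) = V y - V x := by
    intro x y h
    rw [hVx x y, intervalIntegral.integral_of_le h, hq_def, setIntegral_indicator hEm, vmass]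
    exact setIntegral_congr_set (hae x y)
  have hP1 : P 1 = a := by
    have h := hwin_mu 0 1 zero_le_one
    rw [inter_eq_left.2 hEsub] at h
    rw [ha_def]; linarith
  have hV1 : V 1 = a / 2 := by
    have h := hwin_v 0 1 zero_le_one
    rw [inter_eq_left.2 hEsub, hEcomp] at h
    rw [ha_def]; linarith
  have hmono : ∀ x y : ℝ, x ≤ y → 0 ≤ V y - V x ∧ V y - V x ≤ P y - P x := by
    intro x y h
    constructor
    · rw [hVx x y]; exact intervalIntegral.integral_nonneg h fun u _ => hq0 u
    · rw [hVx x y, hPx x y]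
      exact intervalIntegral.integral_mono_on h (hqint.intervalIntegrable)
        (hpint.intervalIntegrable) fun u _ => hqp u
  have hPmono : ∀ x y : ℝ, x ≤ y → P x ≤ P y := by
    intro x y h
    have h1 := hPx x y
    have h2 : 0 ≤ ∫ u in x..y, p u := intervalIntegral.integral_nonneg h (fun u _ => hp0 u)
    linarith
  -- the inverse parametrisation τ
  have hτex : ∀ u ∈ Icc (0:ℝ) a, ∃ x, x ∈ Icc (0:ℝ) 1 ∧ P x = u := by
    intro u hu
    have hmem : u ∈ Icc (P 0) (P 1) := by rw [hP0, hP1]; exact hu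
    obtain ⟨x, hx, hPx'⟩ := intermediate_value_Icc zero_le_one hPcont.continuousOn hmem
    exact ⟨x, hx, hPx'⟩
  choose! τ hτmem hτP using hτex
  have hτmono : ∀ u ∈ Icc (0:ℝ) a, ∀ u' ∈ Icc (0:ℝ) a, u ≤ u' → τ u ≤ τ u' := by
    intro u hu u' hu' h
    rcases eq_or_lt_of_le h with rfl | hlt
    · exact le_rfl
    · by_contra hτ
      push_neg at hτ
      have := hPmono _ _ hτ.le
      rw [hτP u hu, hτP u' hu'] at this
      linarith
  set 𝒱 : ℝ → ℝ := fun u => V (τ u) with h𝒱_def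
  have h𝒱0 : 𝒱 0 = 0 := by
    have h0a : (0:ℝ) ∈ Icc (0:ℝ) a := ⟨le_rfl, ha0.le⟩
    have h1 := hmono 0 (τ 0) (hτmem 0 h0a).1
    rw [hP0, hτP 0 h0a, hV0] at h1
    rw [h𝒱_def]; simp only []
    linarith [h1.1, h1.2]
  have h𝒱a : 𝒱 a = a / 2 := by
    have haa : a ∈ Icc (0:ℝ) a := ⟨ha0.le, le_rfl⟩
    have h1 := hmono (τ a) 1 (hτmem a haa).2
    rw [hP1, hτP a haa, hV1] at h1
    rw [h𝒱_def]; simp only []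
    linarith [h1.1, h1.2]
  have h𝒱lip : ∀ u ∈ Icc (0:ℝ) a, ∀ u' ∈ Icc (0:ℝ) a, u ≤ u' →
      0 ≤ 𝒱 u' - 𝒱 u ∧ 𝒱 u' - 𝒱 u ≤ u' - u := by
    intro u hu u' hu' h
    have h1 := hmono (τ u) (τ u') (hτmono u hu u' hu' h)
    rw [hτP u hu, hτP u' hu'] at h1
    exact h1
  have h𝒱contOn : ContinuousOn 𝒱 (Icc 0 a) := by
    refine LipschitzOnWith.continuousOn (K := 1) (LipschitzOnWith.of_dist_le_mul fun u hu u' hu' => ?_)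
    rw [NNReal.coe_one, one_mul, Real.dist_eq, Real.dist_eq]
    rcases le_total u u' with h | h
    · have := h𝒱lip u hu u' hu' h
      rw [abs_le]
      constructor
      · rw [abs_of_nonpos (by linarith)]; linarith [this.1, this.2]
      · rw [abs_of_nonpos (by linarith)]; linarith [this.1, this.2]
    · have := h𝒱lip u' hu' u hu h
      rw [abs_le]
      constructor
      · rw [abs_of_nonneg (by linarith)]; linarith [this.1, this.2]
      · rw [abs_of_nonneg (by linarith)]; linarith [this.1, this.2]
  set c : ℝ → ℝ := fun u => min (max u 0) a with hc_def
  have hcmem : ∀ u, c u ∈ Icc (0:ℝ) a := fun u =>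
    ⟨le_min (le_max_right u 0) ha0.le, min_le_right _ _⟩
  have hcid : ∀ u ∈ Icc (0:ℝ) a, c u = u := by
    intro u hu
    rw [hc_def]; simp only []
    rw [max_eq_left hu.1, min_eq_left hu.2]
  have hccont : Continuous c := (continuous_id.max continuous_const).min continuous_const
  set W : ℝ → ℝ := fun u => 𝒱 (c u) with hW_def
  have hWcont : Continuous W := h𝒱contOn.comp_continuous hccont hcmem
  have hWeq : ∀ u ∈ Icc (0:ℝ) a, W u = 𝒱 u := by
    intro u hu
    rw [hW_def]; simp only []
    rw [hcid u hu]
  set F : ℝ → ℝ := fun u => W u + W (u - a) with hF_def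
  have hFcont : Continuous F := hWcont.add (hWcont.comp (continuous_id.sub continuous_const))
  have hF1 : ∀ u ∈ Icc (0:ℝ) a, F u = 𝒱 u := by
    intro u hu
    have h1 : W (u - a) = 0 := by
      rw [hW_def]; simp only []
      have hc0 : c (u - a) = 0 := by
        rw [hc_def]; simp only []
        rw [max_eq_right (by linarith [hu.2]), min_eq_left ha0.le]
      rw [hc0, h𝒱0]
    rw [hF_def]; simp only []
    rw [hWeq u hu, h1, add_zero]
  have hF2 : ∀ u ∈ Icc (0:ℝ) a, F (u + a) = a / 2 + 𝒱 u := by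
    intro u hu
    have h1 : W (u + a) = a / 2 := by
      rw [hW_def]; simp only []
      have hca : c (u + a) = a := by
        rw [hc_def]; simp only []
        rw [max_eq_left (by linarith [hu.1, ha0.le]), min_eq_right (by linarith [hu.1])]
      rw [hca, h𝒱a]
    have h2 : W (u + a - a) = 𝒱 u := by
      have : u + a - a = u := by ring
      rw [this, hWeq u hu]
    rw [hF_def]; simp only []
    rw [h1, h2]
  set G : ℝ → ℝ := fun u => F (u + s) - F u - s / 2 with hG_def
  have hGcont : Continuous G :=
    ((hFcont.comp (continuous_id.add continuous_const)).sub hFcont).sub continuous_const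
  have hFint : ∀ x y : ℝ, IntervalIntegrable F volume x y := fun x y =>
    hFcont.intervalIntegrable x y
  have hGint0 : (∫ u in (0:ℝ)..a, G u) = 0 := by
    have e1 : (∫ u in (0:ℝ)..a, F (u + s)) = ∫ u in s..(a + s), F u := by
      have h := intervalIntegral.integral_comp_add_right (a := (0:ℝ)) (b := a) F s
      rwa [zero_add] at h
    have e2 : (∫ u in s..(a + s), F u) = (∫ u in s..a, F u) + ∫ u in a..(a + s), F u :=
      (intervalIntegral.integral_add_adjacent_intervals (hFint s a) (hFint a (a + s))).symm
    have e3 : (∫ u in (0:ℝ)..a, F u) = (∫ u in (0:ℝ)..s, F u) + ∫ u in s..a, F u :=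
      (intervalIntegral.integral_add_adjacent_intervals (hFint 0 s) (hFint s a)).symm
    have e4 : (∫ u in a..(a + s), F u) = ∫ u in (0:ℝ)..s, F (u + a) := by
      have h := intervalIntegral.integral_comp_add_right (a := (0:ℝ)) (b := s) F a
      rw [zero_add, add_comm s a] at h
      exact h.symm
    have e5 : (∫ u in (0:ℝ)..s, F (u + a)) = ∫ u in (0:ℝ)..s, (a / 2 + F u) := by
      apply intervalIntegral.integral_congr
      intro u hu
      rw [Set.uIcc_of_le hspos.le] at hu
      have hu' : u ∈ Icc (0:ℝ) a := ⟨hu.1, hu.2.trans hsa⟩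
      show F (u + a) = a / 2 + F u
      rw [hF2 u hu', hF1 u hu']
    have e6 : (∫ u in (0:ℝ)..s, (a / 2 + F u)) = s * (a / 2) + ∫ u in (0:ℝ)..s, F u := by
      rw [intervalIntegral.integral_add (intervalIntegrable_const) (hFint 0 s)]
      simp [intervalIntegral.integral_const]
      ring
    have e7 : (∫ u in (0:ℝ)..a, G u) =
        (∫ u in (0:ℝ)..a, F (u + s)) - (∫ u in (0:ℝ)..a, F u) - a * (s / 2) := by
      have hc1 : Continuous fun u : ℝ => F (u + s) := by fun_prop
      have hi1 : IntervalIntegrable (fun u : ℝ => F (u + s)) volume 0 a :=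
        hc1.intervalIntegrable 0 a
      show (∫ u in (0:ℝ)..a, (F (u + s) - F u - s / 2)) = _
      rw [intervalIntegral.integral_sub (hi1.sub (hFint 0 a)) intervalIntegrable_const,
        intervalIntegral.integral_sub hi1 (hFint 0 a)]
      simp [intervalIntegral.integral_const]
      ring
    rw [e7, e1, e2, e3, e4, e5, e6]
    ring
  have hzero : ∃ u ∈ Icc (0:ℝ) a, G u = 0 := by
    by_contra hno
    push_neg at hno
    have hsign' : (∀ u ∈ Icc (0:ℝ) a, 0 < G u) ∨ (∀ u ∈ Icc (0:ℝ) a, G u < 0) := by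
      by_contra hd
      push_neg at hd
      obtain ⟨⟨u1, hu1, hle1⟩, ⟨u2, hu2, hle2⟩⟩ := hd
      have hsub : uIcc u1 u2 ⊆ Icc (0:ℝ) a := Set.uIcc_subset_Icc hu1 hu2
      have hmem : (0:ℝ) ∈ uIcc (G u1) (G u2) := by
        rw [Set.mem_uIcc]
        left
        exact ⟨hle1, hle2⟩
      obtain ⟨u, hu, h0⟩ := intermediate_value_uIcc (hGcont.continuousOn) hmem
      exact hno u (hsub hu) h0
    rcases hsign' with h | h
    · have hpos : 0 < ∫ u in (0:ℝ)..a, G u :=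
        intervalIntegral.intervalIntegral_pos_of_pos_on (hGcont.intervalIntegrable 0 a)
          (fun x hx => h x ⟨hx.1.le, hx.2.le⟩) ha0
      rw [hGint0] at hpos
      exact lt_irrefl 0 hpos
    · have hpos : 0 < ∫ u in (0:ℝ)..a, -G u :=
        intervalIntegral.intervalIntegral_pos_of_pos_on
          ((hGcont.neg).intervalIntegrable 0 a)
          (fun x hx => neg_pos.2 (h x ⟨hx.1.le, hx.2.le⟩)) ha0
      rw [intervalIntegral.integral_neg, hGint0, neg_zero] at hpos
      exact lt_irrefl 0 hpos
  obtain ⟨u0, hu0, hGu0⟩ := hzero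
  have hGu0' : F (u0 + s) - F u0 - s / 2 = 0 := hGu0
  have hFu0 : F u0 = 𝒱 u0 := hF1 u0 hu0
  by_cases hcase : u0 + s ≤ a
  · -- middle window
    have hu0s : u0 + s ∈ Icc (0:ℝ) a := ⟨by linarith [hu0.1, hspos.le], hcase⟩
    have hττ : τ u0 ≤ τ (u0 + s) := hτmono u0 hu0 _ hu0s (by linarith [hspos.le])
    set D : Set ℝ := E ∩ Icc (τ u0) (τ (u0 + s)) with hD_def
    have hmuD : mu D = s := by
      rw [hD_def, hwin_mu _ _ hττ, hτP _ hu0s, hτP _ hu0]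
      ring
    have hvD : vmass f D = s / 2 := by
      rw [hD_def, hwin_v _ _ hττ]
      have h1 : F (u0 + s) = 𝒱 (u0 + s) := hF1 _ hu0s
      have h2 : 𝒱 (u0 + s) = V (τ (u0 + s)) := rfl
      have h3 : 𝒱 u0 = V (τ u0) := rfl
      linear_combination hGu0' - h1 - h2 + hFu0 + h3
    have hDd : IsDistrict D := hEd.inter_Icc_s4 _ _
    have hcontr : mstar + 1 ≤ mstar := by
      refine hmax (mstar + 1) ⟨D, hDd, ?_, ?_⟩
      · rw [hvD, hmuD]
      · rw [hmuD, hs_def]; push_cast; ring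
    omega
  · -- wrap-around window
    push_neg at hcase
    set u1 : ℝ := u0 + s - a with hu1_def
    have hu1mem : u1 ∈ Icc (0:ℝ) a := ⟨by linarith, by linarith [hu0.2, hsa]⟩
    have hu1le : u1 ≤ u0 := by rw [hu1_def]; linarith [hsa]
    have hτ1mem : τ u1 ∈ Icc (0:ℝ) 1 := hτmem _ hu1mem
    have hτ0mem : τ u0 ∈ Icc (0:ℝ) 1 := hτmem _ hu0
    have hττ : τ u1 ≤ τ u0 := hτmono _ hu1mem _ hu0 hu1le
    set A : Set ℝ := E ∩ Icc 0 (τ u1) with hA_def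
    set B : Set ℝ := E ∩ Icc (τ u0) 1 with hB_def
    have hAsub : A ⊆ Icc 0 1 := inter_subset_left.trans hEsub
    have hBsub : B ⊆ Icc 0 1 := inter_subset_left.trans hEsub
    have hinter : A ∩ B ⊆ {τ u0} := by
      rintro x ⟨⟨-, hx1⟩, ⟨-, hx2⟩⟩
      have hx : x = τ u0 := le_antisymm (hx1.2.trans hττ) hx2.1
      simp [hx]
    have hdisj : AEDisjoint volume A B :=
      measure_mono_null hinter (measure_singleton _)
    have hBnull : NullMeasurableSet B volume :=
      (hEm.inter measurableSet_Icc).nullMeasurableSet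
    have hmuA : mu A = u1 := by
      rw [hA_def, hwin_mu 0 (τ u1) hτ1mem.1, hτP _ hu1mem, hP0]
      ring
    have hvA : vmass f A = 𝒱 u1 := by
      rw [hA_def, hwin_v 0 (τ u1) hτ1mem.1, hV0]
      have : 𝒱 u1 = V (τ u1) := rfl
      linarith
    have hmuB : mu B = a - u0 := by
      rw [hB_def, hwin_mu (τ u0) 1 hτ0mem.2, hP1, hτP _ hu0]
    have hvB : vmass f B = a / 2 - 𝒱 u0 := by
      rw [hB_def, hwin_v (τ u0) 1 hτ0mem.2, hV1]
    set D : Set ℝ := A ∪ B with hD_def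
    have hmuD : mu D = s := by
      have h := measure_union₀ hBnull hdisj
      have htr : (volume (A ∪ B)).toReal = (volume A).toReal + (volume B).toReal := by
        rw [h, ENNReal.toReal_add (hfin hAsub) (hfin hBsub)]
      have : mu D = mu A + mu B := htr
      rw [this, hmuA, hmuB, hu1_def]
      ring
    have hvD : vmass f D = s / 2 := by
      have h : vmass f D = vmass f A + vmass f B := by
        rw [hD_def, vmass, integral_union_ae hdisj hBnull (hintOn hAsub) (hintOn hBsub)]
        rfl
      have hFs : F (u0 + s) = a / 2 + 𝒱 u1 := by
        have : u0 + s = u1 + a := by rw [hu1_def]; ring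
        rw [this, hF2 u1 hu1mem]
      rw [h, hvA, hvB]
      linear_combination hGu0' - hFs + hFu0
    have hDd : IsDistrict D := (hEd.inter_Icc_s4 _ _).union_s4 (hEd.inter_Icc_s4 _ _)
    have hcontr : mstar + 1 ≤ mstar := by
      refine hmax (mstar + 1) ⟨D, hDd, ?_, ?_⟩
      · rw [hvD, hmuD]
      · rw [hmuD, hs_def]; push_cast; ring
    omega
end
end
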